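/- Suppose Assumption K holds; then κ₀κ₂ − κ₁² > 0, and there exist a constant C and c₀ > 0 such that for all n ∈ ℕ and h ∈ (0, 1] with nh ≥ c₀, sup_{t ≥ h} |(S_2(t)² − S_1(t) S_3(t))/(S_0(t) S_2(t) − S_1(t)²) − (κ₂² − κ₁κ₃)/(κ₀κ₂ − κ₁²)| ≤ C/(nh). -/

import Mathlib

open MeasureTheory Filter Real Set
open scoped ENNReal NNReal Topology

noncomputable section

/-- The Generalized Extreme Value (GEV) cumulative distribution function. -/
def gevCDF (γ μ σ : ℝ) (x : ℝ) : ℝ :=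
  if γ = 0 then Real.exp (-Real.exp (-(x - μ) / σ))
  else if 0 < 1 + γ * (x - μ) / σ then Real.exp (-(1 + γ * (x - μ) / σ) ^ (-(1 / γ)))
  else if 0 < γ then 0 else 1

/-- The `p`-quantile of the GEV distribution with parameters `(γ, μ, σ)`. -/
def gevQuantile (γ μ σ p : ℝ) : ℝ :=
  if γ = 0 then μ - σ * Real.log (-Real.log p)
  else μ + σ * ((-Real.log p) ^ (-γ) - 1) / γ

/-- σ-field of the past, F_{-∞}^k = σ(ε_i : i ≤ k). -/
def sigmaPast {Ω : Type*} (ε : ℤ → Ω → ℝ) (k : ℤ) : MeasurableSpace Ω :=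
  ⨆ i : {i : ℤ // i ≤ k}, MeasurableSpace.comap (ε i) inferInstance

/-- σ-field of the future, F_j^∞ = σ(ε_i : i ≥ j). -/
def sigmaFuture {Ω : Type*} (ε : ℤ → Ω → ℝ) (j : ℤ) : MeasurableSpace Ω :=
  ⨆ i : {i : ℤ // j ≤ i}, MeasurableSpace.comap (ε i) inferInstance

/-- Strong (α-) mixing coefficients. -/
def alphaMix {Ω : Type*} [MeasurableSpace Ω] (P : Measure Ω) (ε : ℤ → Ω → ℝ) (m : ℕ) : ℝ :=
  sSup {x : ℝ | ∃ (k j : ℤ) (A B : Set Ω),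
    k < j - (m : ℤ) ∧ MeasurableSet[sigmaPast ε k] A ∧ MeasurableSet[sigmaFuture ε j] B ∧
    x = |(P (A ∩ B)).toReal - (P A).toReal * (P B).toReal|}

/-- The process is strongly mixing if α(m) → 0. -/
def StronglyMixing {Ω : Type*} [MeasurableSpace Ω] (P : Measure Ω) (ε : ℤ → Ω → ℝ) : Prop :=
  Tendsto (fun m => alphaMix P ε m) atTop (𝓝 0)

/-- Strict stationarity of the process. -/
def StrictlyStationary {Ω : Type*} [MeasurableSpace Ω] (P : Measure Ω) (ε : ℤ → Ω → ℝ) : Prop :=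
  ∀ (k : ℤ) (m : ℕ) (idx : Fin m → ℤ) (s : Set (Fin m → ℝ)), MeasurableSet s →
    P {ω | (fun j => ε (idx j + k) ω) ∈ s} = P {ω | (fun j => ε (idx j) ω) ∈ s}

/-- Assumption K on the kernel. -/
def AssumpK (K : ℝ → ℝ) : Prop :=
  (∀ x, 0 ≤ K x) ∧ (∀ x, x ∉ Set.Icc (-1 : ℝ) 0 → K x = 0) ∧
  (∫ x in (-1 : ℝ)..0, K x) = 1 ∧
  ∃ C : ℝ≥0, LipschitzOnWith C K (Set.Ioo (-1 : ℝ) 0)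

/-- Kernel moments κ_ℓ. -/
def kappa (K : ℝ → ℝ) (l : ℕ) : ℝ := ∫ x in (-1 : ℝ)..0, x ^ l * K x

/-- S_ℓ(t). -/
def Sl (K : ℝ → ℝ) (n : ℕ) (h : ℝ) (l : ℕ) (t : ℝ) : ℝ :=
  (1 / (n * h)) * ∑' i : ℕ, (((i : ℝ) - n * t) / (n * h)) ^ l * K (((i : ℝ) - n * t) / (n * h))

/-- R_ℓ(t). -/
def Rl (K : ℝ → ℝ) (X : ℕ → ℝ) (n : ℕ) (h : ℝ) (l : ℕ) (t : ℝ) : ℝ :=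
  (1 / (n * h)) * ∑' i : ℕ,
    X i * (((i : ℝ) - n * t) / (n * h)) ^ l * K (((i : ℝ) - n * t) / (n * h))

/-- One-sided local linear estimator with bandwidth h. -/
def muHat (K : ℝ → ℝ) (X : ℕ → ℝ) (n : ℕ) (h : ℝ) (t : ℝ) : ℝ :=
  (Sl K n h 2 t * Rl K X n h 0 t - Sl K n h 1 t * Rl K X n h 1 t) /
    (Sl K n h 0 t * Sl K n h 2 t - Sl K n h 1 t ^ 2)

/-- The Jackknife bias-reduced estimator. -/
def muTilde (K : ℝ → ℝ) (X : ℕ → ℝ) (n : ℕ) (hn : ℝ) (t : ℝ) : ℝ :=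
  2 * muHat K X n (hn / Real.sqrt 2) t - muHat K X n hn t

/-- Equivalent local linear kernel b̄K. -/
def barK (K : ℝ → ℝ) (x : ℝ) : ℝ :=
  (kappa K 2 - kappa K 1 * x) / (kappa K 0 * kappa K 2 - kappa K 1 ^ 2) * K x

/-- The Jackknife kernel K*. -/
def Kstar (K : ℝ → ℝ) (x : ℝ) : ℝ :=
  2 * Real.sqrt 2 * barK K (Real.sqrt 2 * x) - barK K x

/-- Assumption M: μ twice differentiable with Lipschitz second derivative. -/
def AssumpM (μ : ℝ → ℝ) : Prop :=
  (∀ x, DifferentiableAt ℝ μ x) ∧ (∀ x, DifferentiableAt ℝ (deriv μ) x) ∧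
  ∃ C : ℝ≥0, LipschitzWith C (deriv (deriv μ))

/-- Assumption E on the error process (with scaling sequences a, b, limit GEV cdf G
and scaling exponent γ). -/
def AssumpE {Ω : Type*} [MeasurableSpace Ω] (P : Measure Ω) (ε : ℤ → Ω → ℝ)
    (a b : ℕ → ℝ) (G : ℝ → ℝ) (γ : ℝ) : Prop :=
  (∀ i, Measurable (ε i)) ∧
  StrictlyStationary P ε ∧
  (∀ i, ∫ ω, ε i ω ∂P = 0) ∧
  StronglyMixing P ε ∧
  (∃ δ > (0 : ℝ), ∃ C : ℝ, (∀ i : ℤ, ∫ ω, |ε i ω| ^ (4 + δ) ∂P ≤ C) ∧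
    Summable (fun i : ℕ => alphaMix P ε (i + 1) ^ (1 / 6 - 1 / δ))) ∧
  (∀ n, 0 < a n) ∧
  (∃ γ₀ μ₀ σ₀ : ℝ, 0 < σ₀ ∧ G = gevCDF γ₀ μ₀ σ₀) ∧
  (∃ (Ω' : Type) (_ : MeasurableSpace Ω') (Q : Measure Ω') (_ : IsProbabilityMeasure Q)
      (εt : ℕ → Ω' → ℝ),
    (∀ i, Measurable (εt i)) ∧
    ProbabilityTheory.iIndepFun εt Q ∧
    (∀ i, Measure.map (εt i) Q = Measure.map (ε 1) P) ∧
    (∀ x : ℝ, Tendsto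
      (fun n => (Q {ω | ∀ i ∈ Finset.Icc 1 n, |εt i ω| ≤ a n * x + b n}).toReal)
      atTop (𝓝 (G x)))) ∧
  (∃ x L : ℝ, Tendsto
      (fun n : ℕ => (P {ω | ∀ i ∈ Finset.Icc (1 : ℤ) (n : ℤ), |ε i ω| ≤ a n * x + b n}).toReal)
      atTop (𝓝 L)) ∧
  (∀ r : ℕ → ℕ, (∀ n, 1 ≤ r n) → Tendsto (fun n => (r n : ℝ) / n) atTop (𝓝 0) →
    ∀ᶠ n in atTop,
      a n / a (r n) = ((n : ℝ) / r n) ^ γ ∧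
      b n = b (r n) + a (r n) * (((n : ℝ) / r n) ^ γ - 1) / γ)


/-- The bandwidth rate condition \eqref{eq:conv_rate}. -/
def BandwidthRate (h a : ℕ → ℝ) : Prop :=
  (∀ n, h n ∈ Set.Ioo (0 : ℝ) 1) ∧ Tendsto h atTop (𝓝 0) ∧
  Tendsto (fun n : ℕ => (1 / a n) * (h n ^ 3 +
    Real.sqrt (|Real.log (h n)| / (n * h n)) + 1 / (n * h n ^ ((5 : ℝ) / 4))))
    atTop (𝓝 0)

/-- Assumption T: the extremal index ρ, the GEV parameters θ_ρ = (γρ, μρ, σρ) of 𝒢^ρ and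
estimators (γ̂ₙ, μ̂ₙ, σ̂ₙ) of θₙ = (γρ, aₙ μρ + bₙ, aₙ σρ) satisfying the stated
consistency rates. -/
def AssumpT {Ω : Type*} [MeasurableSpace Ω] (P : Measure Ω) (ε : ℤ → Ω → ℝ)
    (a b : ℕ → ℝ) (G : ℝ → ℝ) (ρ γρ μρ σρ : ℝ) (γhat μhat σhat : ℕ → Ω → ℝ) : Prop :=
  ρ ∈ Set.Ioc (0 : ℝ) 1 ∧
  (∀ x : ℝ, Tendsto (fun n : ℕ =>
      (P {ω | ∀ i ∈ Finset.Icc (1 : ℤ) (n : ℤ), |ε i ω| ≤ a n * x + b n}).toReal)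
    atTop (𝓝 (G x ^ ρ))) ∧
  0 < σρ ∧ (∀ x, G x ^ ρ = gevCDF γρ μρ σρ x) ∧
  (∀ n, Measurable (γhat n)) ∧ (∀ n, Measurable (μhat n)) ∧ (∀ n, Measurable (σhat n)) ∧
  (∀ η > (0 : ℝ),
    Tendsto (fun n => (P {ω | η < |γhat n ω - γρ|}).toReal) atTop (𝓝 0)) ∧
  (∀ η > (0 : ℝ),
    Tendsto (fun n => (P {ω | η < |(μhat n ω - (a n * μρ + b n)) / a n|}).toReal)
      atTop (𝓝 0)) ∧
  (∀ η > (0 : ℝ),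
    Tendsto (fun n => (P {ω | η < |(σhat n ω - a n * σρ) / a n|}).toReal) atTop (𝓝 0))

/-- The weight-approximation error Δₙ(i, t). -/
def DeltaK (K : ℝ → ℝ) (n : ℕ) (h : ℝ) (i : ℕ) (t : ℝ) : ℝ :=
  (Sl K n h 2 t - Sl K n h 1 t * (((i : ℝ) - n * t) / (n * h))) /
      (Sl K n h 0 t * Sl K n h 2 t - Sl K n h 1 t ^ 2) *
      K (((i : ℝ) - n * t) / (n * h)) -
    barK K (((i : ℝ) - n * t) / (n * h))

/-- L²-norm of a real function. -/
def l2norm (f : ℝ → ℝ) : ℝ := Real.sqrt (∫ x, f x ^ 2)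


/-!
`S_ℓ(t)` is a right-endpoint Riemann sum, with mesh `1/(nh)`, of `x ↦ x^ℓ K(x)`, a bounded function
supported on `[-1, 0]` and Lipschitz inside it. Writing the Riemann sum as the integral of `f`
composed with rounding up to the grid, the integrand is within `O(1/(nh))` of `f` except on two
intervals of length `1/(nh)` next to the jumps at `-1` and `0`; hence `|S_ℓ(t) - κ_ℓ| = O(1/(nh))`.
The denominator `κ₀κ₂ - κ₁² = ∫ (x - κ₁)² K(x) dx` is positive, so the ratio is a `C¹` function of
`(S₀, …, S₃)` near `(κ₀, …, κ₃)`, hence locally Lipschitz, and the error carries over.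
-/

open Function

lemma LipschitzOnWith.mul_of_norm_le {α R : Type*} [PseudoMetricSpace α] [SeminormedRing R]
    {f g : α → R} {s : Set α} {Kf Kg Mf Mg : ℝ≥0} (hf : LipschitzOnWith Kf f s)
    (hg : LipschitzOnWith Kg g s) (hfM : ∀ x ∈ s, ‖f x‖ ≤ Mf) (hgM : ∀ x ∈ s, ‖g x‖ ≤ Mg) :
    LipschitzOnWith (Mf * Kg + Mg * Kf) (fun x => f x * g x) s := by
  refine LipschitzOnWith.of_dist_le_mul fun x hx y hy => ?_
  have hgxy : ‖g x - g y‖ ≤ Kg * dist x y := by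
    simpa only [dist_eq_norm] using hg.dist_le_mul x hx y hy
  have hfxy : ‖f x - f y‖ ≤ Kf * dist x y := by
    simpa only [dist_eq_norm] using hf.dist_le_mul x hx y hy
  calc dist (f x * g x) (f y * g y) = ‖f x * (g x - g y) + (f x - f y) * g y‖ := by
        rw [dist_eq_norm]; congr 1; noncomm_ring
    _ ≤ ‖f x‖ * ‖g x - g y‖ + ‖f x - f y‖ * ‖g y‖ :=
        (norm_add_le _ _).trans (add_le_add (norm_mul_le _ _) (norm_mul_le _ _))
    _ ≤ Mf * (Kg * dist x y) + Kf * dist x y * Mg := by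
        gcongr
        exacts [hfM x hx, hgM y hy]
    _ = ↑(Mf * Kg + Mg * Kf) * dist x y := by push_cast; ring

lemma lipschitzOnWith_pow_of_abs_le_one {s : Set ℝ} (hs : ∀ x ∈ s, |x| ≤ 1) (l : ℕ) :
    LipschitzOnWith l (fun x : ℝ => x ^ l) s := by
  induction l with
  | zero =>
    simpa only [pow_zero, Nat.cast_zero] using (LipschitzWith.const (1 : ℝ)).lipschitzOnWith
  | succ l ih =>
    have hpow : ∀ x ∈ s, ‖x ^ l‖ ≤ (1 : ℝ≥0) := fun x hx => by
      simpa using pow_le_one₀ (abs_nonneg x) (hs x hx)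
    have hid : ∀ x ∈ s, ‖x‖ ≤ (1 : ℝ≥0) := fun x hx => by simpa using hs x hx
    simpa [pow_succ, add_comm] using
      ih.mul_of_norm_le LipschitzWith.id.lipschitzOnWith hpow hid

lemma intervalIntegral_eq_of_support_subset_Icc {E : Type*} [NormedAddCommGroup E]
    [NormedSpace ℝ E] {f : ℝ → E} {α β p q : ℝ} (hf : support f ⊆ Icc α β) (hαβ : α ≤ β)
    (hp : p < α) (hq : β ≤ q) : ∫ x in p..q, f x = ∫ x in α..β, f x := by
  rw [intervalIntegral.integral_eq_integral_of_support_subset (hf.trans (Icc_subset_Ioc hp hq)),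
    intervalIntegral.integral_of_le hαβ, ← integral_Icc_eq_integral_Ioc,
    setIntegral_eq_integral_of_forall_compl_eq_zero (support_subset_iff'.1 hf)]

/-- The least point of the grid `{(i - a) / N : i ∈ ℤ}` that is `≥ x`. -/
def gridRoundUp (N a x : ℝ) : ℝ := (⌈N * x + a⌉ - a) / N

section gridRoundUp

variable {N a : ℝ}

lemma le_gridRoundUp (hN : 0 < N) (x : ℝ) : x ≤ gridRoundUp N a x := by
  rw [gridRoundUp, le_div_iff₀ hN]
  linarith [Int.le_ceil (N * x + a)]

lemma gridRoundUp_lt (hN : 0 < N) (x : ℝ) : gridRoundUp N a x < x + 1 / N := by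
  rw [gridRoundUp, div_lt_iff₀ hN, add_mul, one_div_mul_cancel hN.ne']
  linarith [Int.ceil_lt_add_one (N * x + a)]

lemma gridRoundUp_eq_of_mem_Ioc (hN : 0 < N) {k : ℕ} {x : ℝ}
    (hx : x ∈ Ioc ((k - 1 - a) / N) ((k - a) / N)) : gridRoundUp N a x = (k - a) / N := by
  obtain ⟨h₁, h₂⟩ := hx
  rw [div_lt_iff₀ hN] at h₁
  rw [le_div_iff₀ hN] at h₂
  rw [gridRoundUp, (Int.ceil_eq_iff (z := k)).2 ⟨by push_cast; linarith, by push_cast; linarith⟩]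
  push_cast; rfl

lemma intervalIntegrable_comp_gridRoundUp {f : ℝ → ℝ} {M : ℝ} (hM : ∀ x, |f x| ≤ M) (b c : ℝ) :
    IntervalIntegrable (fun x => f (gridRoundUp N a x)) volume b c := by
  have hmeas : Measurable fun x => f (gridRoundUp N a x) :=
    (Measurable.of_discrete (f := fun z : ℤ => f ((z - a) / N))).comp
      ((measurable_const.mul measurable_id).add_const a).ceil
  exact intervalIntegrable_const.mono_fun' hmeas.aestronglyMeasurable
    (ae_of_all _ fun x => hM _)

lemma sum_range_eq_integral_comp_gridRoundUp (f : ℝ → ℝ) (hN : 0 < N) (a : ℝ) (n : ℕ) :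
    1 / N * ∑ i ∈ Finset.range n, f ((i - a) / N) =
      ∫ x in (-1 - a) / N..(n - 1 - a) / N, f (gridRoundUp N a x) := by
  set u : ℕ → ℝ := fun k => (k - 1 - a) / N
  have hu : ∀ k : ℕ, u (k + 1) = (k - a) / N := fun k => by simp only [u]; push_cast; ring
  have hle : ∀ k : ℕ, u k ≤ u (k + 1) := fun k => by
    simp only [u]; gcongr; linarith
  have hcell : ∀ k : ℕ, EqOn (fun x => f (gridRoundUp N a x)) (fun _ => f ((k - a) / N))
      (uIoc (u k) (u (k + 1))) := fun k x hx => by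
    rw [uIoc_of_le (hle k), hu] at hx
    simp only [gridRoundUp_eq_of_mem_Ioc hN hx]
  have hcell_int : ∀ k : ℕ,
      ∫ x in u k..u (k + 1), f (gridRoundUp N a x) = 1 / N * f ((k - a) / N) := fun k => by
    rw [intervalIntegral.integral_congr_ae (ae_of_all _ (hcell k)),
      intervalIntegral.integral_const, smul_eq_mul, hu]
    simp only [u]; field_simp; ring
  have hsum := intervalIntegral.sum_integral_adjacent_intervals (a := u) (n := n)
    fun k _ => (intervalIntegrable_const (μ := volume) (c := f ((k - a) / N))).congr (hcell k).symm
  simp only [hcell_int] at hsum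
  rw [Finset.mul_sum, hsum]
  simp [u]

lemma abs_integral_comp_gridRoundUp_sub_le {f : ℝ → ℝ} {M C : ℝ≥0} (hfi : Integrable f)
    (hsupp : support f ⊆ Icc (-1) 0) (hM : ∀ x, |f x| ≤ M) (hC : LipschitzOnWith C f (Ioo (-1) 0))
    (hN : 1 ≤ N) {p q : ℝ} (hp : p ≤ -1 - 1 / N) (hq : 0 ≤ q) :
    |∫ x in p..q, (f (gridRoundUp N a x) - f x)| ≤ (C + 4 * M) / N := by
  have hN0 : 0 < N := by linarith
  have hN1 : 1 / N ≤ 1 := by rw [div_le_one hN0]; exact hN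
  have hN1' : 0 < 1 / N := one_div_pos.2 hN0
  have hneg : -1 / N = -(1 / N) := neg_div N 1
  have hzero := support_subset_iff'.1 hsupp
  set g := fun x => f (gridRoundUp N a x) - f x
  have hgi : ∀ b c, IntervalIntegrable g volume b c := fun b c =>
    (intervalIntegrable_comp_gridRoundUp hM b c).sub hfi.intervalIntegrable
  have hg_le : ∀ x, |g x| ≤ 2 * M := fun x =>
    (abs_sub _ _).trans (by linarith [hM x, hM (gridRoundUp N a x)])
  have hg_left : ∀ x ≤ -1 - 1 / N, g x = 0 := fun x hx => by
    have hr := gridRoundUp_lt (a := a) hN0 x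
    simp only [g, hzero x fun h => by linarith [h.1],
      hzero (gridRoundUp N a x) fun h => by linarith [h.1], sub_zero]
  have hg_right : ∀ x, 0 < x → g x = 0 := fun x hx => by
    have hr := le_gridRoundUp (a := a) hN0 x
    simp only [g, hzero x fun h => by linarith [h.2],
      hzero (gridRoundUp N a x) fun h => by linarith [h.2], sub_zero]
  have hg_mid : ∀ x ∈ Ioc (-1) (-1 / N), |g x| ≤ C / N := fun x hx => by
    have hr₁ := le_gridRoundUp (a := a) hN0 x
    have hr₂ := gridRoundUp_lt (a := a) hN0 x
    have hx' : x ∈ Ioo (-1) 0 := ⟨hx.1, by linarith [hx.2]⟩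
    have hrx : gridRoundUp N a x ∈ Ioo (-1) 0 := ⟨by linarith [hx.1], by linarith [hx.2]⟩
    calc |g x| ≤ C * |gridRoundUp N a x - x| := by
          simpa only [Real.dist_eq] using hC.dist_le_mul _ hrx _ hx'
      _ ≤ C * (1 / N) := by
          gcongr; rw [abs_of_nonneg (by linarith)]; linarith
      _ = C / N := by ring
  have piece : ∀ {b c κ : ℝ}, b ≤ c → (∀ x ∈ Ioc b c, |g x| ≤ κ) →
      |∫ x in b..c, g x| ≤ κ * (c - b) := fun hbc h => by
    simpa [abs_of_nonneg (sub_nonneg.2 hbc)] using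
      intervalIntegral.norm_integral_le_of_norm_le_const fun x hx =>
        (Real.norm_eq_abs _).trans_le (h x (uIoc_of_le hbc ▸ hx))
  have h₁ := abs_le.1 <| (piece hp fun x hx => by rw [hg_left x hx.2, abs_zero]).trans_eq
    (zero_mul _)
  have h₂ := abs_le.1 <| (piece (c := -1) (by linarith) fun x _ => hg_le x).trans_eq
    (by ring : (2 * M : ℝ) * (-1 - (-1 - 1 / N)) = 2 * M / N)
  have h₃ := abs_le.1 <| (piece (b := -1) (c := -1 / N) (by linarith) hg_mid).trans
    (mul_le_of_le_one_right (by positivity) (by linarith) :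
      (C / N : ℝ) * (-1 / N - -1) ≤ C / N)
  have h₄ := abs_le.1 <| (piece (b := -1 / N) (c := 0) (by linarith) fun x _ => hg_le x).trans_eq
    (by ring : (2 * M : ℝ) * (0 - -1 / N) = 2 * M / N)
  have h₅ := abs_le.1 <| (piece hq fun x hx => by rw [hg_right x hx.1, abs_zero]).trans_eq
    (zero_mul _)
  have htotal : ((C : ℝ) + 4 * M) / N = C / N + 2 * M / N + 2 * M / N := by ring
  have e₁ := intervalIntegral.integral_add_adjacent_intervals (hgi p (-1 - 1 / N)) (hgi _ q)
  have e₂ := intervalIntegral.integral_add_adjacent_intervals (hgi (-1 - 1 / N) (-1)) (hgi _ q)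
  have e₃ := intervalIntegral.integral_add_adjacent_intervals (hgi (-1) (-1 / N)) (hgi _ q)
  have e₄ := intervalIntegral.integral_add_adjacent_intervals (hgi (-1 / N) 0) (hgi _ q)
  rw [htotal]
  exact abs_le.2 ⟨by linarith [h₁.1, h₂.1, h₃.1, h₄.1, h₅.1],
    by linarith [h₁.2, h₂.2, h₃.2, h₄.2, h₅.2]⟩

end gridRoundUp

theorem abs_riemannSum_sub_integral_le {f : ℝ → ℝ} {M C : ℝ≥0} (hfi : Integrable f)
    (hsupp : support f ⊆ Icc (-1) 0) (hM : ∀ x, |f x| ≤ M) (hC : LipschitzOnWith C f (Ioo (-1) 0))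
    {N a : ℝ} (hN : 1 ≤ N) (ha : N ≤ a) :
    |1 / N * ∑' i : ℕ, f ((i - a) / N) - ∫ x in (-1 : ℝ)..0, f x| ≤ (C + 4 * M) / N := by
  have hN0 : 0 < N := by linarith
  set n := ⌈a⌉₊ + 1
  have hsum : ∑' i : ℕ, f ((i - a) / N) = ∑ i ∈ Finset.range n, f ((i - a) / N) := by
    refine tsum_eq_sum fun i hi => support_subset_iff'.1 hsupp _ fun hx => ?_
    have hi : (n : ℝ) ≤ i := by exact_mod_cast not_lt.1 (Finset.mem_range.not.1 hi)
    have : a < i := by push_cast [n] at hi; linarith [Nat.le_ceil a]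
    linarith [hx.2, div_pos (sub_pos.2 this) hN0]
  have hp : (-1 - a) / N ≤ -1 - 1 / N := by
    rw [div_le_iff₀ hN0, sub_mul, one_div_mul_cancel hN0.ne']; linarith
  have hq : 0 ≤ ((n : ℝ) - 1 - a) / N := by
    refine div_nonneg ?_ hN0.le
    push_cast [n]; linarith [Nat.le_ceil a]
  rw [hsum, sum_range_eq_integral_comp_gridRoundUp f hN0 a n,
    ← intervalIntegral_eq_of_support_subset_Icc hsupp (by norm_num)
      (hp.trans_lt (by linarith [one_div_pos.2 hN0])) hq,
    ← intervalIntegral.integral_sub (intervalIntegrable_comp_gridRoundUp hM _ _)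
      hfi.intervalIntegrable]
  exact abs_integral_comp_gridRoundUp_sub_le hfi hsupp hM hC hN hp hq

section AssumpK

variable {K : ℝ → ℝ}

lemma AssumpK.support_subset (hK : AssumpK K) : support K ⊆ Icc (-1) 0 :=
  support_subset_iff'.2 hK.2.1

lemma AssumpK.integrable (hK : AssumpK K) : Integrable K := by
  have hIoc : IntegrableOn K (Ioc (-1) 0) :=
    (intervalIntegrable_iff_integrableOn_Ioc_of_le (by norm_num)).1
      (intervalIntegral.intervalIntegrable_of_integral_ne_zero (by simp [hK.2.2.1]))
  exact (integrableOn_iff_integrable_of_support_subset hK.support_subset).1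
    ((integrableOn_Icc_iff_integrableOn_Ioc (by simp)).2 hIoc)

lemma AssumpK.integrable_pow_mul (hK : AssumpK K) (l : ℕ) : Integrable fun x => x ^ l * K x :=
  (integrableOn_iff_integrable_of_support_subset
    ((support_mul_subset_right _ _).trans hK.support_subset)).1
    (IntegrableOn.continuousOn_mul (continuous_pow l).continuousOn hK.integrable.integrableOn
      isCompact_Icc)

lemma AssumpK.exists_abs_le (hK : AssumpK K) : ∃ M : ℝ≥0, ∀ x, |K x| ≤ M := by
  obtain ⟨C, hC⟩ := hK.2.2.2
  have hmid : (-1 / 2 : ℝ) ∈ Ioo (-1) 0 := by norm_num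
  refine ⟨C + nnabs (K (-1 / 2)) + nnabs (K (-1)) + nnabs (K 0), fun x => ?_⟩
  push_cast
  have h₀ := abs_nonneg (K 0)
  have h₁ := abs_nonneg (K (-1))
  have h₂ := abs_nonneg (K (-1 / 2))
  by_cases hx : x ∈ Ioo (-1) 0
  · have hdist : |x - -1 / 2| ≤ 1 := abs_le.2 ⟨by linarith [hx.1], by linarith [hx.2]⟩
    have hKx : |K x - K (-1 / 2)| ≤ C * |x - -1 / 2| := by
      simpa only [Real.dist_eq] using hC.dist_le_mul x hx _ hmid
    have := abs_sub_abs_le_abs_sub (K x) (K (-1 / 2))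
    nlinarith [C.coe_nonneg]
  · by_cases hx' : x ∈ Icc (-1) 0
    · obtain rfl | rfl : x = -1 ∨ x = 0 := by
        by_contra! h; exact hx ⟨lt_of_le_of_ne hx'.1 h.1.symm, lt_of_le_of_ne hx'.2 h.2⟩
      all_goals linarith [C.coe_nonneg]
    · rw [hK.2.1 x hx', abs_zero]; positivity

lemma AssumpK.kappa_zero (hK : AssumpK K) : kappa K 0 = 1 := by
  simpa [kappa] using hK.2.2.1

lemma AssumpK.kappa_mul_sub_sq_pos (hK : AssumpK K) :
    0 < kappa K 0 * kappa K 2 - kappa K 1 ^ 2 := by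
  set c := kappa K 1
  have hi : ∀ l : ℕ, IntervalIntegrable (fun x => x ^ l * K x) volume (-1) 0 := fun l =>
    (hK.integrable_pow_mul l).intervalIntegrable
  have hvar : kappa K 0 * kappa K 2 - c ^ 2 = ∫ x in (-1 : ℝ)..0, (x - c) ^ 2 * K x := by
    have hexp : ∀ x, (x - c) ^ 2 * K x =
        x ^ 2 * K x - 2 * c * (x ^ 1 * K x) + c ^ 2 * (x ^ 0 * K x) := fun x => by ring
    simp_rw [hexp]
    rw [intervalIntegral.integral_add ((hi 2).sub ((hi 1).const_mul _)) ((hi 0).const_mul _),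
      intervalIntegral.integral_sub (hi 2) ((hi 1).const_mul _),
      intervalIntegral.integral_const_mul, intervalIntegral.integral_const_mul]
    change _ = kappa K 2 - 2 * c * kappa K 1 + c ^ 2 * kappa K 0
    rw [hK.kappa_zero]; ring
  have hKpos : 0 < volume (support K ∩ Ioc (-1) 0) :=
    ((intervalIntegral.integral_pos_iff_support_of_nonneg_ae (ae_of_all _ hK.1)
      hK.integrable.intervalIntegrable).1 (by rw [hK.2.2.1]; exact one_pos)).2
  have hsupp : support (fun x => (x - c) ^ 2 * K x) ∩ Ioc (-1) 0 =
      (support K ∩ Ioc (-1) 0) \ {c} := by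
    ext x
    simp only [mem_inter_iff, Set.mem_sdiff, mem_support, mem_singleton_iff, ne_eq, mul_eq_zero,
      pow_eq_zero_iff two_ne_zero, sub_eq_zero]
    tauto
  rw [hvar, intervalIntegral.integral_pos_iff_support_of_nonneg_ae
    (ae_of_all _ fun x => mul_nonneg (sq_nonneg _) (hK.1 x))
    (hK.integrable.intervalIntegrable.continuousOn_mul (by fun_prop)), hsupp,
    measure_sdiff_null (measure_singleton c)]
  exact ⟨by norm_num, hKpos⟩

lemma AssumpK.exists_abs_Sl_sub_kappa_le (hK : AssumpK K) :
    ∃ A : ℝ, 0 ≤ A ∧ ∀ (n : ℕ) (h t : ℝ) (l : ℕ), l ≤ 3 → 1 ≤ n * h → n * h ≤ n * t →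
      |Sl K n h l t - kappa K l| ≤ A / (n * h) := by
  obtain ⟨M, hM⟩ := hK.exists_abs_le
  obtain ⟨C, hC⟩ := hK.2.2.2
  refine ⟨C + 7 * M, by positivity, fun n h t l hl hN ht => ?_⟩
  have hsupp : support (fun x => x ^ l * K x) ⊆ Icc (-1) 0 :=
    (support_mul_subset_right _ _).trans hK.support_subset
  have hbound : ∀ x, |x ^ l * K x| ≤ M := fun x => by
    by_cases hx : x ∈ Icc (-1 : ℝ) 0
    · rw [abs_mul, abs_pow]
      exact (mul_le_of_le_one_left (abs_nonneg _)
        (pow_le_one₀ (abs_nonneg _) (abs_le.2 ⟨hx.1, by linarith [hx.2]⟩))).trans (hM x)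
    · rw [hK.2.1 x hx, mul_zero, abs_zero]; exact M.coe_nonneg
  have hlip : LipschitzOnWith (1 * C + M * l) (fun x => x ^ l * K x) (Ioo (-1) 0) :=
    (lipschitzOnWith_pow_of_abs_le_one (fun x hx => abs_le.2 ⟨hx.1.le, by linarith [hx.2]⟩) l
      ).mul_of_norm_le hC
      (fun x hx => by
        simpa using pow_le_one₀ (abs_nonneg x) (abs_le.2 ⟨hx.1.le, by linarith [hx.2]⟩))
      (fun x _ => hM x)
  calc |Sl K n h l t - kappa K l| ≤ (↑(1 * C + M * l) + 4 * M) / (n * h) :=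
        abs_riemannSum_sub_integral_le (hK.integrable_pow_mul l) hsupp hbound hlip hN ht
    _ ≤ (C + 7 * M) / (n * h) := by
        have hl' : (l : ℝ) ≤ 3 := by exact_mod_cast hl
        gcongr ?_ / _
        push_cast
        nlinarith [M.coe_nonneg]

end AssumpK

theorem ContDiffAt.exists_norm_sub_le {𝕜 E F : Type*} [RCLike 𝕜] [NormedAddCommGroup E]
    [NormedSpace 𝕜 E] [NormedAddCommGroup F] [NormedSpace 𝕜 F] {f : E → F} {x : E}
    (hf : ContDiffAt 𝕜 1 f x) :
    ∃ (L : ℝ≥0) (δ : ℝ), 0 < δ ∧ ∀ y, ‖y - x‖ ≤ δ → ‖f y - f x‖ ≤ L * ‖y - x‖ := by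
  obtain ⟨L, t, ht, hL⟩ := hf.exists_lipschitzOnWith
  obtain ⟨ε, hε, hball⟩ := Metric.mem_nhds_iff.1 ht
  refine ⟨L, ε / 2, half_pos hε, fun y hy => ?_⟩
  have hy : y ∈ t := hball (mem_ball_iff_norm.2 (hy.trans_lt (half_lt_self hε)))
  simpa only [dist_eq_norm] using hL.dist_le_mul y hy x (hball (Metric.mem_ball_self hε))

def biasConstant (s : Fin 4 → ℝ) : ℝ := (s 2 ^ 2 - s 1 * s 3) / (s 0 * s 2 - s 1 ^ 2)

lemma contDiffAt_biasConstant {s : Fin 4 → ℝ} (hs : s 0 * s 2 - s 1 ^ 2 ≠ 0) :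
    ContDiffAt ℝ 1 biasConstant s := by
  unfold biasConstant
  fun_prop (disch := exact hs)

/-- Uniform approximation of the bias constant:
κ₀κ₂ − κ₁² > 0 and sup_{t ≥ h} |(S₂² − S₁S₃)/(S₀S₂ − S₁²) − (κ₂² − κ₁κ₃)/(κ₀κ₂ − κ₁²)|
≤ C/(n h). -/
theorem bias_constant_uniform_approximation (K : ℝ → ℝ) (hK : AssumpK K) :
    0 < kappa K 0 * kappa K 2 - kappa K 1 ^ 2 ∧
    ∃ C c₀ : ℝ, 0 < c₀ ∧ ∀ (n : ℕ) (h : ℝ), 0 < h → h ≤ 1 → c₀ ≤ (n : ℝ) * h →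
      ∀ t : ℝ, h ≤ t →
        |(Sl K n h 2 t ^ 2 - Sl K n h 1 t * Sl K n h 3 t) /
            (Sl K n h 0 t * Sl K n h 2 t - Sl K n h 1 t ^ 2) -
          (kappa K 2 ^ 2 - kappa K 1 * kappa K 3) /
            (kappa K 0 * kappa K 2 - kappa K 1 ^ 2)| ≤ C / ((n : ℝ) * h) := by
  obtain ⟨A, hA0, hA⟩ := hK.exists_abs_Sl_sub_kappa_le
  have hD := hK.kappa_mul_sub_sq_pos
  set κ : Fin 4 → ℝ := fun l => kappa K l
  obtain ⟨L, δ, hδ, hL⟩ := (contDiffAt_biasConstant (s := κ) hD.ne').exists_norm_sub_le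
  refine ⟨hD, L * A, max 1 (A / δ), by positivity, fun n h _ _ hN t ht => ?_⟩
  have hN1 : 1 ≤ (n : ℝ) * h := le_of_max_le_left hN
  have hN0 : 0 < (n : ℝ) * h := by linarith
  set S : Fin 4 → ℝ := fun l => Sl K n h l t
  have hSκ : ‖S - κ‖ ≤ A / (n * h) := (pi_norm_le_iff_of_nonneg (by positivity)).2 fun l => by
    rw [Pi.sub_apply, Real.norm_eq_abs]
    exact hA n h t l (by omega) hN1 (mul_le_mul_of_nonneg_left ht n.cast_nonneg)
  have hSκδ : A / (n * h) ≤ δ := by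
    rw [div_le_iff₀ hN0]
    linarith [(div_le_iff₀ hδ).1 (le_of_max_le_right hN)]
  calc _ = ‖biasConstant S - biasConstant κ‖ := rfl
    _ ≤ L * ‖S - κ‖ := hL S (hSκ.trans hSκδ)
    _ ≤ L * (A / (n * h)) := by gcongr
    _ = L * A / (n * h) := by ring
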